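/- arXiv:1807.08698 — 5 statements merged into one kernel-verified Lean document; each statement's English description precedes it below -/
import Mathlib

section
/- Let V be a finite-dimensional vector space over a field K of characteristic p > 0, and let X, Y ∈ End(V) with X^m = 0 where m = ⌊(p+1)/2⌋. Define E(X) = Σ_{k=0}^{p-1} X^k / k! and let Ad_E(Y) = Σ_{k=0}^{p-1} (1/k!)·(ad X)^k(Y), where ad X(Y) = XY − YX. Then Ad_E(Y) = E(X) · Y · E(−X). -/
/-- The truncated exponential `E(X) = ∑_{k=0}^{p-1} X^k / k!`. -/
noncomputable def texp (K : Type*) [Field K] {A : Type*} [Ring A] [Algebra K A]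
    (p : ℕ) (a : A) : A :=
  ∑ k ∈ Finset.range p, (Nat.factorial k : K)⁻¹ • a ^ k

lemma triangle_sum {M : Type*} [AddCommMonoid M] (p : ℕ) (F : ℕ → ℕ → M) :
    ∑ k ∈ Finset.range p, ∑ i ∈ Finset.range (k + 1), F i (k - i)
      = ∑ i ∈ Finset.range p, ∑ j ∈ Finset.range (p - i), F i j := by
  rw [Finset.sum_sigma', Finset.sum_sigma']
  refine Finset.sum_nbij' (fun q => ⟨q.2, q.1 - q.2⟩) (fun q => ⟨q.1 + q.2, q.1⟩)
    ?_ ?_ ?_ ?_ ?_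
  · rintro ⟨k, i⟩ hq
    simp only [Finset.mem_sigma, Finset.mem_range] at hq ⊢
    omega
  · rintro ⟨i, j⟩ hq
    simp only [Finset.mem_sigma, Finset.mem_range] at hq ⊢
    omega
  · rintro ⟨k, i⟩ hq
    simp only [Finset.mem_sigma, Finset.mem_range] at hq
    refine Sigma.ext ?_ ?_ <;> simp <;> omega
  · rintro ⟨i, j⟩ hq
    simp only [Finset.mem_sigma, Finset.mem_range] at hq
    refine Sigma.ext ?_ ?_ <;> simp <;> omega
  · rintro ⟨k, i⟩ _
    rfl

set_option maxRecDepth 8000 in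
/-- If `X^{⌊(p+1)/2⌋} = 0` then the truncated exponential of `ad X` applied to `Y`
equals conjugation of `Y` by the truncated exponential `E(X)`. -/
theorem stmt_3 (K : Type*) [Field K] (p : ℕ) [Fact p.Prime] [CharP K p]
    (V : Type*) [AddCommGroup V] [Module K V] [FiniteDimensional K V]
    (X Y : Module.End K V) (hX : X ^ ((p + 1) / 2) = 0) :
    (∑ k ∈ Finset.range p,
        (Nat.factorial k : K)⁻¹ • (fun Z : Module.End K V => X * Z - Z * X)^[k] Y) =
      texp K p X * Y * texp K p (-X) := by
  have hp : p.Prime := Fact.out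
  set m := (p + 1) / 2 with hm
  -- vanishing of cross terms
  have hz : ∀ i j : ℕ, p ≤ i + j → X ^ i * Y * X ^ j = 0 := by
    intro i j hij
    rcases le_or_gt m i with h | h
    · have hXi : X ^ i = 0 := by
        have : X ^ i = X ^ m * X ^ (i - m) := by rw [← pow_add, Nat.add_sub_cancel' h]
        rw [this, hX, zero_mul]
      rw [hXi, zero_mul, zero_mul]
    · have hj : m ≤ j := by omega
      have hXj : X ^ j = 0 := by
        have : X ^ j = X ^ m * X ^ (j - m) := by rw [← pow_add, Nat.add_sub_cancel' hj]
        rw [this, hX, zero_mul]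
      rw [hXj, mul_zero]
  -- the generic term
  set F : ℕ → ℕ → Module.End K V := fun i j =>
    (((Nat.factorial i : K)⁻¹ * (Nat.factorial j : K)⁻¹ * (-1) ^ j) • (X ^ i * Y * X ^ j))
    with hF
  -- factorials of numbers < p are nonzero in K
  have hfac : ∀ n : ℕ, n < p → (Nat.factorial n : K) ≠ 0 := by
    intro n hn
    have : ¬ p ∣ n.factorial := by
      rw [hp.dvd_factorial]; omega
    simpa [CharP.cast_eq_zero_iff K p] using this
  -- rewrite LHS
  have hL : (∑ k ∈ Finset.range p,
      (Nat.factorial k : K)⁻¹ • (fun Z : Module.End K V => X * Z - Z * X)^[k] Y)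
      = ∑ k ∈ Finset.range p, ∑ i ∈ Finset.range (k + 1), F i (k - i) := by
    refine Finset.sum_congr rfl fun k hk => ?_
    have hk' : k < p := Finset.mem_range.mp hk
    have hiter : (fun Z : Module.End K V => X * Z - Z * X)^[k] Y
        = ((LinearMap.mulLeft K X - LinearMap.mulRight K X) ^ k) Y := by
      have h : (fun Z : Module.End K V => X * Z - Z * X)
          = ⇑(LinearMap.mulLeft K X - LinearMap.mulRight K X) := by
        funext Z; simp
      rw [h, Module.End.pow_apply]
    have hbin : (LinearMap.mulLeft K X - LinearMap.mulRight K X) ^ k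
        = ∑ i ∈ Finset.range (k + 1), (LinearMap.mulLeft K X) ^ i *
            (-(LinearMap.mulRight K X)) ^ (k - i) *
            (k.choose i : Module.End K (Module.End K V)) := by
      rw [sub_eq_add_neg]
      exact Commute.add_pow
        (Commute.neg_right (R := Module.End K (Module.End K V))
          (LinearMap.commute_mulLeft_right X X)) k
    rw [hiter, hbin, LinearMap.sum_apply, Finset.smul_sum]
    refine Finset.sum_congr rfl fun i hi => ?_
    have hi' : i ≤ k := Nat.lt_succ_iff.mp (Finset.mem_range.mp hi)
    have : ((LinearMap.mulLeft K X) ^ i * (-(LinearMap.mulRight K X)) ^ (k - i) *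
        (k.choose i : Module.End K (Module.End K V))) Y
        = ((k.choose i : K) * (-1) ^ (k - i)) • (X ^ i * Y * X ^ (k - i)) := by
      rw [show (-(LinearMap.mulRight K X)) ^ (k - i)
          = ((-1 : K) ^ (k - i)) • (LinearMap.mulRight K X) ^ (k - i) from by
        rw [← neg_one_smul K (LinearMap.mulRight K X), smul_pow]]
      simp only [Module.End.mul_apply, LinearMap.smul_apply, Module.End.natCast_apply,
        LinearMap.pow_mulLeft, LinearMap.pow_mulRight, LinearMap.mulLeft_apply,
        LinearMap.mulRight_apply, map_smul, map_nsmul]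
      rw [← Nat.cast_smul_eq_nsmul K, smul_smul, mul_assoc]
    rw [this, hF]
    simp only [smul_smul]
    congr 1
    have hkey : (Nat.factorial k : K)⁻¹ * ((k.choose i : K) * (-1) ^ (k - i))
        = (Nat.factorial i : K)⁻¹ * (Nat.factorial (k - i) : K)⁻¹ * (-1) ^ (k - i) := by
      have h1 : (k.choose i : K) * (Nat.factorial i : K) * (Nat.factorial (k - i) : K)
          = (Nat.factorial k : K) := by
        rw [← Nat.cast_mul, ← Nat.cast_mul, Nat.choose_mul_factorial_mul_factorial hi']
      have hik : (Nat.factorial i : K) ≠ 0 := hfac i (by omega)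
      have hkk : (Nat.factorial (k - i) : K) ≠ 0 := hfac (k - i) (by omega)
      have hkf : (Nat.factorial k : K) ≠ 0 := hfac k hk'
      field_simp
      rw [← h1]
    rw [hkey]
  rw [hL]
  -- rewrite RHS
  have hR : texp K p X * Y * texp K p (-X)
      = ∑ i ∈ Finset.range p, ∑ j ∈ Finset.range p, F i j := by
    rw [texp, texp, Finset.sum_mul, Finset.sum_mul]
    refine Finset.sum_congr rfl fun i _ => ?_
    rw [Finset.mul_sum]
    refine Finset.sum_congr rfl fun j _ => ?_
    rw [hF]
    rw [show (-X) ^ j = ((-1 : K) ^ j) • X ^ j from by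
      rw [← neg_one_smul K X, smul_pow]]
    simp only [smul_mul_assoc, mul_smul_comm, smul_smul]
    ring_nf
  rw [hR]
  -- kill the terms with i + j ≥ p on the RHS
  have hR2 : ∀ i ∈ Finset.range p, ∑ j ∈ Finset.range p, F i j
      = ∑ j ∈ Finset.range (p - i), F i j := by
    intro i hi
    refine (Finset.sum_subset (Finset.range_subset_range.mpr (by omega)) ?_).symm
    intro j _ hj
    have : p ≤ i + j := by
      have := Finset.mem_range.not.mp hj
      omega
    rw [hF]
    simp [hz i j this]
  rw [Finset.sum_congr rfl hR2]
  exact triangle_sum p F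
end

section
/- Let H be a Hopf algebra over a field K of characteristic p > 0 and let x ∈ H be a primitive element with x^p = 0. Set e^x = Σ_{k=0}^{p-1} x^k / k!. Then Δ(e^x) − e^x ⊗ e^x lies in the span of tensors x^i ⊗ x^j with i + j ≥ p; in particular if additionally x^m = 0 for m = ⌊(p+1)/2⌋, then Δ(e^x) = e^x ⊗ e^x, i.e., e^x is group-like. -/
open TensorProduct Finset

lemma comul_pow_primitive (K H : Type*) [Field K] [Ring H] [HopfAlgebra K H] (x : H)
    (hprim : Coalgebra.comul (R := K) x = x ⊗ₜ[K] 1 + 1 ⊗ₜ[K] x) (k : ℕ) :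
    Coalgebra.comul (R := K) (x ^ k) =
      ∑ m ∈ range (k + 1), (k.choose m) • ((x ^ m) ⊗ₜ[K] (x ^ (k - m))) := by
  rw [show Coalgebra.comul (R := K) (x^k) = Bialgebra.comulAlgHom K H (x^k) from rfl, map_pow,
    show (Bialgebra.comulAlgHom K H x : H ⊗[K] H) = Coalgebra.comul (R := K) x from rfl, hprim]
  have hc : Commute (x ⊗ₜ[K] (1:H)) ((1:H) ⊗ₜ[K] x) := by
    simp [Commute, SemiconjBy, Algebra.TensorProduct.tmul_mul_tmul]
  rw [hc.add_pow]
  refine Finset.sum_congr rfl fun m hm => ?_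
  rw [Algebra.TensorProduct.tmul_pow, Algebra.TensorProduct.tmul_pow,
    Algebra.TensorProduct.tmul_mul_tmul]
  simp only [one_pow, one_mul, mul_one, nsmul_eq_mul]
  exact ((Nat.cast_commute (k.choose m) _).eq).symm

/-- For a primitive element `x` of a Hopf algebra with `x^p = 0`,
`Δ(e^x) − e^x ⊗ e^x` lies in the span of the tensors `x^i ⊗ x^j` with `i + j ≥ p`;
in particular if moreover `x^{⌊(p+1)/2⌋} = 0` then `e^x` is group-like. -/
theorem stmt_8 (K : Type*) [Field K] (p : ℕ) [Fact p.Prime] [CharP K p]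
    (H : Type*) [Ring H] [HopfAlgebra K H] (x : H)
    (hprim : Coalgebra.comul (R := K) x = x ⊗ₜ[K] 1 + 1 ⊗ₜ[K] x)
    (hx : x ^ p = 0) :
    Coalgebra.comul (R := K) (texp K p x) - texp K p x ⊗ₜ[K] texp K p x ∈
      Submodule.span K {t : H ⊗[K] H | ∃ i j : ℕ, p ≤ i + j ∧ t = (x ^ i) ⊗ₜ[K] (x ^ j)} ∧
    (x ^ ((p + 1) / 2) = 0 →
      Coalgebra.comul (R := K) (texp K p x) = texp K p x ⊗ₜ[K] texp K p x) := by
  classical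
  have hfact : ∀ k, k < p → (k.factorial : K) ≠ 0 := by
    intro k hk
    rw [Ne, CharP.cast_eq_zero_iff K p]
    exact fun h => absurd ((Nat.Prime.dvd_factorial Fact.out).mp h) (by omega)
  set f : ℕ × ℕ → H ⊗[K] H := fun ij =>
    ((ij.1.factorial : K)⁻¹ * (ij.2.factorial : K)⁻¹) • ((x ^ ij.1) ⊗ₜ[K] (x ^ ij.2)) with hf
  set S := Finset.range p ×ˢ Finset.range p with hS
  have hA : Coalgebra.comul (R := K) (texp K p x) =
      ∑ ij ∈ S.filter (fun ij => ij.1 + ij.2 < p), f ij := by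
    rw [texp, map_sum]
    simp_rw [map_smul, comul_pow_primitive K H x hprim, Finset.smul_sum]
    rw [Finset.sum_sigma']
    refine Finset.sum_nbij' (fun kp => (kp.2, kp.1 - kp.2)) (fun ij => ⟨ij.1 + ij.2, ij.1⟩)
      ?_ ?_ ?_ ?_ ?_
    · intro a ha
      simp only [Finset.mem_sigma, Finset.mem_range] at ha
      simp only [Finset.mem_filter, hS, Finset.mem_product, Finset.mem_range]
      omega
    · intro a ha
      simp only [Finset.mem_filter, hS, Finset.mem_product, Finset.mem_range] at ha
      simp only [Finset.mem_sigma, Finset.mem_range]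
      omega
    · intro a ha
      simp only [Finset.mem_sigma, Finset.mem_range] at ha
      ext <;> simp <;> omega
    · intro a ha
      simp only [Finset.mem_filter, hS, Finset.mem_product, Finset.mem_range] at ha
      simp
    · intro a ha
      obtain ⟨k, m⟩ := a
      simp only [Finset.mem_sigma, Finset.mem_range] at ha
      simp only [hf]
      rw [← Nat.cast_smul_eq_nsmul K, smul_smul]
      congr 1
      have hmk : m ≤ k := by omega
      have h1 : (k.choose m : K) * m.factorial * (k - m).factorial = k.factorial := by
        exact_mod_cast congrArg (Nat.cast : ℕ → K)
          (Nat.choose_mul_factorial_mul_factorial hmk)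
      field_simp [hfact k (by omega), hfact m (by omega), hfact (k - m) (by omega)]
      linear_combination h1
  have hB : texp K p x ⊗ₜ[K] texp K p x = ∑ ij ∈ S, f ij := by
    rw [texp, hS, Finset.sum_product, TensorProduct.sum_tmul]
    refine Finset.sum_congr rfl fun i _ => ?_
    rw [TensorProduct.tmul_sum]
    refine Finset.sum_congr rfl fun j _ => ?_
    simp only [TensorProduct.tmul_smul, TensorProduct.smul_tmul', smul_smul, hf]
    rw [mul_comm]
  have key : Coalgebra.comul (R := K) (texp K p x) - texp K p x ⊗ₜ[K] texp K p x =
      -∑ ij ∈ S.filter (fun ij => ¬ ij.1 + ij.2 < p), f ij := by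
    rw [hA, hB, ← Finset.sum_filter_add_sum_filter_not S (fun ij => ij.1 + ij.2 < p) f]
    abel
  constructor
  · rw [key]
    refine neg_mem (Submodule.sum_mem _ fun ij hij => Submodule.smul_mem _ _
      (Submodule.subset_span ⟨ij.1, ij.2, ?_, rfl⟩))
    simp only [Finset.mem_filter, hS, Finset.mem_product, Finset.mem_range] at hij
    omega
  · intro hxm
    rw [← sub_eq_zero, key, neg_eq_zero]
    refine Finset.sum_eq_zero fun ij hij => ?_
    simp only [Finset.mem_filter, hS, Finset.mem_product, Finset.mem_range] at hij
    have : (p + 1) / 2 ≤ ij.1 ∨ (p + 1) / 2 ≤ ij.2 := by omega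
    rcases this with h | h
    · have : x ^ ij.1 = 0 := by
        rw [show ij.1 = (p + 1) / 2 + (ij.1 - (p + 1) / 2) by omega, pow_add, hxm, zero_mul]
      simp [hf, this]
    · have : x ^ ij.2 = 0 := by
        rw [show ij.2 = (p + 1) / 2 + (ij.2 - (p + 1) / 2) by omega, pow_add, hxm, zero_mul]
      simp [hf, this]
end

section
/- Let g be a finite-dimensional restricted Lie algebra over a field K of characteristic p, with a faithful over-restricted representation (V, θ), meaning θ(x)^{⌊(p+1)/2⌋} = 0 for all x ∈ N_p(g). Let G_V ≤ GL(V) be the group generated by the exponentials e^{θ(x)}, x ∈ N_p(g), and G_g ≤ GL(g) the group generated by the exponentials e^{ad(x)}, x ∈ N_p(g). Then the assignment e^{θ(x)} ↦ e^{ad(x)} extends to a well-defined surjective group homomorphism φ : G_V → G_g whose kernel is contained in the center of G_V and in Aut_g(V). -/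
attribute [local instance] LieRing.ofAssociativeRing

/-!
If `θ x ^ ⌊(p+1)/2⌋ = 0`, the truncated exponential behaves like the true one on everything
built from `θ x`: `e^{a+b} = e^a e^b` holds for commuting `a, b` with `a ^ m = b ^ n = 0`
and `m + n ≤ p + 1`, since every term `a ^ i b ^ j` with `i + j ≥ p` vanishes. Applied to `a`
and `-a` it makes `e^{θ x}` a unit, and applied to left and right multiplication by `θ x`
(whose difference is `ad (θ x)`) it gives `θ (e^{ad x} y) = e^{θ x} θ y e^{-θ x}`.
Hence every element `u` of `G_V` conjugates `θ g` into itself, and conjugation by `u`,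
pulled back along the injective `θ`, is a homomorphism `G_V → GL(g)` sending `e^{θ x}` to
`e^{ad x}`, so its image is `G_g`. An element of the kernel commutes with `θ g`, hence with
every generator `e^{θ x}` and so with all of `G_V`.
-/

open Finset

section TruncatedExp

variable {K : Type*} [Field K] {A : Type*} [Ring A] [Algebra K A] {p : ℕ}

lemma Commute.texp_right {a b : A} (h : Commute a b) : Commute a (texp K p b) :=
  Commute.sum_right _ _ _ fun k _ ↦ (h.pow_right k).smul_right _

lemma texp_mulLeft (a : A) :
    texp K p (LinearMap.mulLeft K a) = LinearMap.mulLeft K (texp K p a) := by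
  ext b
  simp [texp, LinearMap.pow_mulLeft, sum_mul]

lemma texp_mulRight (a : A) :
    texp K p (LinearMap.mulRight K a) = LinearMap.mulRight K (texp K p a) := by
  ext b
  simp [texp, LinearMap.pow_mulRight, mul_sum]

lemma texp_zero (hp : 0 < p) : texp K p (0 : A) = 1 := by
  simp [texp, zero_pow_eq, hp]

variable [Fact p.Prime] [CharP K p]

lemma CharP.factorial_ne_zero_of_lt {k : ℕ} (hk : k < p) : (k.factorial : K) ≠ 0 := by
  rw [Ne, CharP.cast_eq_zero_iff K p, (Fact.out : p.Prime).dvd_factorial]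
  omega

lemma CharP.inv_factorial_mul_choose {i j : ℕ} (h : i + j < p) :
    ((i + j).factorial : K)⁻¹ * ((i + j).choose i : K) =
      (i.factorial : K)⁻¹ * (j.factorial : K)⁻¹ := by
  have hfac : ((i + j).choose i : K) * i.factorial * j.factorial = (i + j).factorial := by
    rw [Nat.choose_symm_add]
    exact_mod_cast congrArg (Nat.cast : ℕ → K) (Nat.add_choose_mul_factorial_mul_factorial i j)
  have := CharP.factorial_ne_zero_of_lt (K := K) h
  have := CharP.factorial_ne_zero_of_lt (K := K) (k := i) (by omega)
  have := CharP.factorial_ne_zero_of_lt (K := K) (k := j) (by omega)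
  field_simp
  linear_combination hfac

lemma texp_add_of_commute {x y : A} (hxy : Commute x y) {m n : ℕ} (hx : x ^ m = 0)
    (hy : y ^ n = 0) (hmn : m + n ≤ p + 1) :
    texp K p (x + y) = texp K p x * texp K p y := by
  set f : ℕ × ℕ → A := fun ij ↦
    ((ij.1.factorial : K)⁻¹ * (ij.2.factorial : K)⁻¹) • (x ^ ij.1 * y ^ ij.2)
  have hf : ∀ ij ∈ range p ×ˢ range p, f ij ≠ 0 → ij.1 + ij.2 < p := by
    intro ⟨i, j⟩ _ hij
    by_contra! hp
    refine hij ?_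
    rcases le_or_gt m i with hi | hi
    · simp [f, pow_eq_zero_of_le hi hx]
    · simp [f, pow_eq_zero_of_le (show n ≤ j by omega) hy]
  calc texp K p (x + y)
      = ∑ k ∈ range p, ∑ ij ∈ antidiagonal k, f ij := by
        refine sum_congr rfl fun k hk ↦ ?_
        rw [hxy.add_pow', smul_sum]
        refine sum_congr rfl fun ⟨i, j⟩ hij ↦ ?_
        rw [HasAntidiagonal.mem_antidiagonal] at hij
        subst hij
        rw [← Nat.cast_smul_eq_nsmul K, smul_smul, CharP.inv_factorial_mul_choose (mem_range.1 hk)]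
    _ = ∑ ij ∈ range p ×ˢ range p with ij.1 + ij.2 < p, f ij := by
        rw [← sum_fiberwise_of_maps_to (s := {ij ∈ range p ×ˢ range p | ij.1 + ij.2 < p})
          (t := range p) (g := fun ij ↦ ij.1 + ij.2)
          (fun ij hij ↦ mem_range.2 (mem_filter.1 hij).2)]
        refine sum_congr rfl fun k hk ↦ sum_congr ?_ fun _ _ ↦ rfl
        ext ⟨i, j⟩
        simp only [HasAntidiagonal.mem_antidiagonal, mem_filter, mem_product, mem_range] at hk ⊢
        omega
    _ = ∑ ij ∈ range p ×ˢ range p, f ij := sum_filter_of_ne hf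
    _ = texp K p x * texp K p y := by
        rw [texp, texp, sum_mul_sum, sum_product]
        refine sum_congr rfl fun i _ ↦ sum_congr rfl fun j _ ↦ ?_
        rw [smul_mul_smul_comm]

lemma texp_mul_texp_neg {a : A} (ha : a ^ ((p + 1) / 2) = 0) :
    texp K p a * texp K p (-a) = 1 := by
  rw [← texp_add_of_commute (Commute.neg_right rfl) ha (by rw [neg_pow, ha, mul_zero]) (by omega),
    add_neg_cancel, texp_zero (Fact.out : p.Prime).pos]

lemma isUnit_texp {a : A} (ha : a ^ ((p + 1) / 2) = 0) : IsUnit (texp K p a) := by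
  have ha' : (-a) ^ ((p + 1) / 2) = 0 := by rw [neg_pow, ha, mul_zero]
  exact isUnit_iff_exists.2 ⟨_, texp_mul_texp_neg ha, by simpa using texp_mul_texp_neg ha'⟩

lemma texp_ad_apply {a : A} (ha : a ^ ((p + 1) / 2) = 0) (b : A) :
    texp K p (LieAlgebra.ad K A a) b = texp K p a * b * texp K p (-a) := by
  have hR : -LinearMap.mulRight K a = LinearMap.mulRight K (-a) := by ext; simp
  have hLm : LinearMap.mulLeft K a ^ ((p + 1) / 2) = 0 := by simp [LinearMap.pow_mulLeft, ha]
  have ha' : (-a) ^ ((p + 1) / 2) = 0 := by rw [neg_pow, ha, mul_zero]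
  have hRm : LinearMap.mulRight K (-a) ^ ((p + 1) / 2) = 0 := by
    simp [LinearMap.pow_mulRight, ha']
  rw [LieAlgebra.ad_eq_lmul_left_sub_lmul_right, Pi.sub_apply, sub_eq_add_neg, hR,
    texp_add_of_commute (LinearMap.commute_mulLeft_right a (-a)) hLm hRm (by omega),
    texp_mulLeft, texp_mulRight]
  simp [mul_assoc]

end TruncatedExp

section LieHom

open LieAlgebra

variable {K : Type*} [Field K] {g : Type*} [LieRing g] [LieAlgebra K g]
  {A : Type*} [Ring A] [Algebra K A]

lemma LieHom.map_ad_pow_apply (θ : g →ₗ⁅K⁆ A) (x y : g) (k : ℕ) :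
    θ ((ad K g x ^ k) y) = (ad K A (θ x) ^ k) (θ y) := by
  induction k with
  | zero => rfl
  | succ k ih =>
    rw [pow_succ', Module.End.mul_apply, ad_apply, LieHom.map_lie, ih, pow_succ',
      Module.End.mul_apply, ad_apply]

variable {p : ℕ} [Fact p.Prime] [CharP K p]

lemma LieHom.map_texp_ad_apply (θ : g →ₗ⁅K⁆ A) {x : g} (hx : θ x ^ ((p + 1) / 2) = 0) (y : g) :
    θ (texp K p (ad K g x) y) = texp K p (θ x) * θ y * texp K p (-θ x) := by
  rw [← texp_ad_apply hx]
  simp [texp, LinearMap.sum_apply, θ.map_ad_pow_apply]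

end LieHom

section Conjugation

variable {K : Type*} [Field K] {g : Type*} [LieRing g] [LieAlgebra K g]
  {A : Type*} [Ring A] [Algebra K A] {θ : g →ₗ⁅K⁆ A}

lemma Units.val_inv_eq_texp_neg {p : ℕ} [Fact p.Prime] [CharP K p] {a : A}
    (ha : a ^ ((p + 1) / 2) = 0) {u : Aˣ} (hu : (u : A) = texp K p a) :
    ((u⁻¹ : Aˣ) : A) = texp K p (-a) :=
  Units.inv_eq_of_mul_eq_one_right (hu ▸ texp_mul_texp_neg ha)

lemma exists_eq_conj_of_mem_closure {S : Set Aˣ}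
    (hS : ∀ u ∈ S, ∀ y, (∃ z, θ z = u * θ y * ↑u⁻¹) ∧ ∃ z, θ z = ↑u⁻¹ * θ y * u)
    {u : Aˣ} (hu : u ∈ Subgroup.closure S) (y : g) : ∃ z, θ z = u * θ y * ↑u⁻¹ := by
  induction hu using Subgroup.closure_induction'' generalizing y with
  | mem u hu => exact (hS u hu y).1
  | inv_mem u hu => simpa using (hS u hu y).2
  | one => exact ⟨y, by simp⟩
  | mul u v _ _ ihu ihv =>
    obtain ⟨z, hz⟩ := ihv y
    obtain ⟨w, hw⟩ := ihu z
    exact ⟨w, by simp only [hw, hz, mul_inv_rev, Units.val_mul, mul_assoc]⟩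

lemma LieHom.exists_eq_conj_of_val_eq_texp {p : ℕ} [Fact p.Prime] [CharP K p]
    (θ : g →ₗ⁅K⁆ A) {x : g} (hx : θ x ^ ((p + 1) / 2) = 0) {u : Aˣ}
    (hu : (u : A) = texp K p (θ x)) (y : g) :
    (∃ z, θ z = u * θ y * ↑u⁻¹) ∧ ∃ z, θ z = ↑u⁻¹ * θ y * u := by
  have hx' : θ (-x) ^ ((p + 1) / 2) = 0 := by rw [map_neg, neg_pow, hx, mul_zero]
  refine ⟨⟨_, (θ.map_texp_ad_apply hx y).trans ?_⟩, ⟨_, (θ.map_texp_ad_apply hx' y).trans ?_⟩⟩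
  · rw [hu, Units.val_inv_eq_texp_neg hx hu]
  · rw [map_neg, neg_neg, hu, Units.val_inv_eq_texp_neg hx hu]

lemma mem_centralizer_closure_of_commute {p : ℕ} {S : Set Aˣ}
    (hS : ∀ w ∈ S, ∃ x, (w : A) = texp K p (θ x)) {u : Aˣ} (hu : ∀ y, Commute (u : A) (θ y)) :
    u ∈ Subgroup.centralizer (Subgroup.closure S : Set Aˣ) := by
  rw [Subgroup.centralizer_closure, Subgroup.mem_centralizer_iff]
  intro w hw
  obtain ⟨x, hx⟩ := hS w hw
  exact (Commute.units_val_iff.1 (hx ▸ ((hu x).texp_right).symm)).eq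

variable (hθ : Function.Injective θ) {H : Subgroup Aˣ}
  (hH : ∀ u ∈ H, ∀ y, ∃ z, θ z = u * θ y * ↑u⁻¹)

noncomputable def conjEnd (u : H) : Module.End K g where
  toFun y := (hH u u.2 y).choose
  map_add' y z := hθ <| by
    rw [(hH u u.2 (y + z)).choose_spec, map_add θ (hH u u.2 y).choose,
      (hH u u.2 y).choose_spec, (hH u u.2 z).choose_spec, map_add, mul_add, add_mul]
  map_smul' c y := hθ <| by
    rw [RingHom.id_apply, (hH u u.2 (c • y)).choose_spec, map_smul θ c (hH u u.2 y).choose,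
      (hH u u.2 y).choose_spec, map_smul, mul_smul_comm, smul_mul_assoc]

lemma conjEnd_apply (u : H) (y : g) :
    θ (conjEnd hθ hH u y) = ↑(u : Aˣ) * θ y * ↑(u : Aˣ)⁻¹ :=
  (hH u u.2 y).choose_spec

noncomputable def conjHom : H →* (Module.End K g)ˣ :=
  MonoidHom.toHomUnits
    { toFun := conjEnd hθ hH
      map_one' := LinearMap.ext fun y ↦ hθ <| by simp [conjEnd_apply]
      map_mul' u v := LinearMap.ext fun y ↦ hθ <| by simp [conjEnd_apply, mul_assoc] }

lemma conjHom_apply (u : H) (y : g) :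
    θ ((conjHom hθ hH u : Module.End K g) y) = ↑(u : Aˣ) * θ y * ↑(u : Aˣ)⁻¹ :=
  conjEnd_apply hθ hH u y

lemma conjHom_eq_texp_ad {p : ℕ} [Fact p.Prime] [CharP K p] {u : H} {x : g}
    (hx : θ x ^ ((p + 1) / 2) = 0) (hu : ((u : Aˣ) : A) = texp K p (θ x)) :
    (conjHom hθ hH u : Module.End K g) = texp K p (LieAlgebra.ad K g x) :=
  LinearMap.ext fun y ↦ hθ <| by
    rw [conjHom_apply, θ.map_texp_ad_apply hx, hu, Units.val_inv_eq_texp_neg hx hu]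

lemma commute_of_conjHom_eq_one {u : H} (hu : conjHom hθ hH u = 1) (y : g) :
    Commute ((u : Aˣ) : A) (θ y) := by
  have h := conjHom_apply hθ hH u y
  rw [hu, Units.val_one, Module.End.one_apply] at h
  exact (Units.mul_inv_eq_iff_eq_mul _).1 h.symm

end Conjugation

lemma MonoidHom.range_eq_closure_of_image_eq {G N : Type*} [Group G] [Group N] {S : Set G}
    {T : Set N} (f : Subgroup.closure S →* N) (h : f '' ((↑) ⁻¹' S) = T) :
    f.range = Subgroup.closure T := by
  rw [f.range_eq_map, ← Subgroup.closure_closure_coe_preimage, f.map_closure, h]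

theorem stmt_12_general (K : Type*) [Field K] (p : ℕ) [Fact p.Prime] [CharP K p]
    (g : Type*) [LieRing g] [LieAlgebra K g]
    (V : Type*) [AddCommGroup V] [Module K V]
    (pmap : g → g) (θ : g →ₗ⁅K⁆ Module.End K V)
    (hfaith : Function.Injective θ)
    (hover : ∀ x : g, pmap x = 0 → θ x ^ ((p + 1) / 2) = 0)
    (GV : Subgroup (Module.End K V)ˣ)
    (hGV : GV = Subgroup.closure
      {u : (Module.End K V)ˣ | ∃ x : g, pmap x = 0 ∧ (u : Module.End K V) = texp K p (θ x)})
    (Gg : Subgroup (Module.End K g)ˣ)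
    (hGg : Gg = Subgroup.closure
      {u : (Module.End K g)ˣ | ∃ x : g, pmap x = 0 ∧
        (u : Module.End K g) = texp K p (LieAlgebra.ad K g x)}) :
    ∃ φ : GV →* Gg,
      Function.Surjective φ ∧
      (∀ (u : GV) (x : g), pmap x = 0 →
        ((u : (Module.End K V)ˣ) : Module.End K V) = texp K p (θ x) →
        ((φ u : (Module.End K g)ˣ) : Module.End K g) = texp K p (LieAlgebra.ad K g x)) ∧
      (∀ u : GV, φ u = 1 →
        (∀ v : GV, u * v = v * u) ∧
        (∀ y : g, ((u : (Module.End K V)ˣ) : Module.End K V) * θ y =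
          θ y * ((u : (Module.End K V)ˣ) : Module.End K V))) := by
  set SV : Set (Module.End K V)ˣ :=
    {u | ∃ x : g, pmap x = 0 ∧ (u : Module.End K V) = texp K p (θ x)}
  set Sg : Set (Module.End K g)ˣ :=
    {u | ∃ x : g, pmap x = 0 ∧ (u : Module.End K g) = texp K p (LieAlgebra.ad K g x)}
  subst hGV hGg
  have hH : ∀ u ∈ Subgroup.closure SV, ∀ y, ∃ z, θ z = u * θ y * ↑u⁻¹ := by
    refine fun _ ↦ exists_eq_conj_of_mem_closure ?_
    rintro w ⟨x, hx, hw⟩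
    exact θ.exists_eq_conj_of_val_eq_texp (hover x hx) hw
  set f := conjHom hfaith hH
  have hf (u : Subgroup.closure SV) (x : g) (hx : pmap x = 0)
      (hu : ((u : (Module.End K V)ˣ) : Module.End K V) = texp K p (θ x)) :
      (f u : Module.End K g) = texp K p (LieAlgebra.ad K g x) :=
    conjHom_eq_texp_ad hfaith hH (hover x hx) hu
  have hrange : f.range = Subgroup.closure Sg := by
    refine f.range_eq_closure_of_image_eq (Set.ext fun w ↦ ⟨?_, ?_⟩)
    · rintro ⟨u, ⟨x, hx, hu⟩, rfl⟩
      exact ⟨x, hx, hf u x hx hu⟩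
    · rintro ⟨x, hx, hw⟩
      let U := (isUnit_texp (K := K) (hover x hx)).unit
      exact ⟨⟨U, Subgroup.subset_closure ⟨x, hx, rfl⟩⟩, ⟨x, hx, rfl⟩,
        Units.ext ((hf _ x hx rfl).trans hw.symm)⟩
  refine ⟨(MulEquiv.subgroupCongr hrange).toMonoidHom.comp f.rangeRestrict,
    (MulEquiv.subgroupCongr hrange).surjective.comp f.rangeRestrict_surjective, hf,
    fun u hu ↦ ?_⟩
  have hcomm := commute_of_conjHom_eq_one hfaith hH (congrArg Subtype.val hu)
  have hcent : (u : (Module.End K V)ˣ) ∈ Subgroup.centralizer (Subgroup.closure SV : Set _) :=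
    mem_centralizer_closure_of_commute (by rintro _ ⟨x, -, hw⟩; exact ⟨x, hw⟩) hcomm
  exact ⟨fun v ↦ Subtype.ext (Subgroup.mem_centralizer_iff.1 hcent v v.2).symm, hcomm⟩

/-- Let `(V, θ)` be a faithful over-restricted representation of a finite-dimensional
restricted Lie algebra `(g, pmap)`, `G_V ≤ GL(V)` the group generated by the
exponentials `e^{θ(x)}`, `x ∈ N_p(g)`, and `G_g ≤ GL(g)` the group generated by the
exponentials `e^{ad(x)}`, `x ∈ N_p(g)`.  Then `e^{θ(x)} ↦ e^{ad(x)}` extends to a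
surjective group homomorphism `φ : G_V → G_g` whose kernel is central in `G_V` and
consists of `g`-module automorphisms of `V`. -/
theorem stmt_12 (K : Type*) [Field K] (p : ℕ) [Fact p.Prime] [CharP K p]
    (g : Type*) [LieRing g] [LieAlgebra K g] [FiniteDimensional K g]
    (V : Type*) [AddCommGroup V] [Module K V] [FiniteDimensional K V]
    (pmap : g → g) (θ : g →ₗ⁅K⁆ Module.End K V)
    (hfaith : Function.Injective θ)
    (hres : ∀ x : g, θ (pmap x) = θ x ^ p)
    (hadres : ∀ x : g, pmap x = 0 → (LieAlgebra.ad K g x) ^ p = 0)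
    (hover : ∀ x : g, pmap x = 0 → θ x ^ ((p + 1) / 2) = 0)
    (GV : Subgroup (Module.End K V)ˣ)
    (hGV : GV = Subgroup.closure
      {u : (Module.End K V)ˣ | ∃ x : g, pmap x = 0 ∧ (u : Module.End K V) = texp K p (θ x)})
    (Gg : Subgroup (Module.End K g)ˣ)
    (hGg : Gg = Subgroup.closure
      {u : (Module.End K g)ˣ | ∃ x : g, pmap x = 0 ∧
        (u : Module.End K g) = texp K p (LieAlgebra.ad K g x)}) :
    ∃ φ : GV →* Gg,
      Function.Surjective φ ∧
      (∀ (u : GV) (x : g), pmap x = 0 →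
        ((u : (Module.End K V)ˣ) : Module.End K V) = texp K p (θ x) →
        ((φ u : (Module.End K g)ˣ) : Module.End K g) = texp K p (LieAlgebra.ad K g x)) ∧
      (∀ u : GV, φ u = 1 →
        (∀ v : GV, u * v = v * u) ∧
        (∀ y : g, ((u : (Module.End K V)ˣ) : Module.End K V) * θ y =
          θ y * ((u : (Module.End K V)ˣ) : Module.End K V))) :=
  stmt_12_general K p g V pmap θ hfaith hover GV hGV Gg hGg
end

section
/- Let K be a field of characteristic p > 0 and let Z ∈ K[[X_1, …, X_n]] be a formal power series of degree less than p in each variable X_i (i.e., a polynomial with each exponent of each variable at most p−1). If Z lies in the ideal generated by Y_1^p for some regular system of parameters Y_1, …, Y_n of K[[X_1, …, X_n]], and Z ≠ 0 as a polynomial, then this yields a contradiction: no nonzero polynomial of degree < p in each X_i lies in B·Y_1^p where B = K[[Y_1,…,Y_n]] = K[[X_1,…,X_n]]. -/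
/-!
In characteristic `p`, the coefficient of `φ ^ p` at `d` is, after truncating `φ` below `d`, that
of a polynomial `f ^ p = (expand p f).map (frobenius _ p)`, so it vanishes unless `p` divides every
exponent of `d`. If moreover `φ` has no constant term, `φ ^ p` and all its multiples have no
monomial with every exponent `< p`, while `Z` does.
-/

namespace MvPowerSeries

variable {σ R : Type*} [CommRing R] (p : ℕ) [ExpChar R p]

theorem coeff_pow_expChar_eq_zero_of_not_dvd (φ : MvPowerSeries σ R) {d : σ →₀ ℕ} {i : σ}
    (h : ¬ p ∣ d i) : coeff d (φ ^ p) = 0 := by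
  classical
  have hd : coeff d (φ ^ p) = ((trunc' R d φ) ^ p).coeff d := calc
    coeff d (φ ^ p) = (trunc' R d (φ ^ p)).coeff d := by rw [coeff_trunc', if_pos le_rfl]
    _ = (trunc' R d ((trunc' R d φ : MvPowerSeries σ R) ^ p)).coeff d := by
      rw [trunc'_trunc'_pow (expChar_pos R p)]
    _ = ((trunc' R d φ) ^ p).coeff d := by
      rw [coeff_trunc', if_pos le_rfl, ← MvPolynomial.coe_pow, MvPolynomial.coeff_coe]
  rw [hd, ← MvPolynomial.map_frobenius_expand, MvPolynomial.coeff_map,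
    MvPolynomial.coeff_expand_of_not_dvd _ h, map_zero]

theorem coeff_pow_expChar_eq_zero_of_lt (φ : MvPowerSeries σ R) (hφ : constantCoeff φ = 0)
    {d : σ →₀ ℕ} (hd : ∀ i, d i < p) : coeff d (φ ^ p) = 0 := by
  obtain rfl | hne := eq_or_ne d 0
  · rw [coeff_zero_eq_constantCoeff_apply, map_pow, hφ, zero_pow (expChar_pos R p).ne']
  · obtain ⟨i, hi⟩ := Finsupp.ne_iff.mp hne
    exact coeff_pow_expChar_eq_zero_of_not_dvd p φ fun hdvd ↦
      hi (Nat.eq_zero_of_dvd_of_lt hdvd (hd i))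

theorem coeff_mul_eq_zero_of_forall_le {f : MvPowerSeries σ R} {e : σ →₀ ℕ}
    (hf : ∀ m ≤ e, coeff m f = 0) (g : MvPowerSeries σ R) : coeff e (f * g) = 0 := by
  classical
  rw [coeff_mul]
  refine Finset.sum_eq_zero fun x hx ↦ ?_
  rw [hf x.1 (Finset.HasAntidiagonal.antidiagonal.fst_le hx), zero_mul]

theorem constantCoeff_eq_zero_of_mem_maximalIdeal {k : Type*} [Field k] {φ : MvPowerSeries σ k}
    (h : φ ∈ IsLocalRing.maximalIdeal (MvPowerSeries σ k)) : constantCoeff φ = 0 := by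
  by_contra h0
  exact h (isUnit_iff_constantCoeff.mpr (isUnit_iff_ne_zero.mpr h0))

end MvPowerSeries

/-- Let `Y₁, …, Yₙ` be a regular system of parameters of `K[[X₁, …, Xₙ]]` (i.e. they
generate the maximal ideal), `char K = p > 0`.  Then no nonzero polynomial `Z` of
degree `< p` in each variable `Xᵢ` is divisible by `Yᵢ₀^p` in the power series ring. -/
theorem stmt_15 (K : Type*) [Field K] (p : ℕ) [Fact p.Prime] [CharP K p]
    (n : ℕ) (Y : Fin n → MvPowerSeries (Fin n) K)
    (hY : Ideal.span (Set.range Y) =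
      IsLocalRing.maximalIdeal (MvPowerSeries (Fin n) K))
    (i₀ : Fin n) (Z : MvPolynomial (Fin n) K) (hZ : Z ≠ 0)
    (hdeg : ∀ i : Fin n, Z.degreeOf i < p) :
    ¬ (Y i₀ ^ p ∣ (Z : MvPowerSeries (Fin n) K)) := by
  rintro ⟨W, hW⟩
  have hY₀ : MvPowerSeries.constantCoeff (Y i₀) = 0 :=
    MvPowerSeries.constantCoeff_eq_zero_of_mem_maximalIdeal (hY ▸ Ideal.subset_span ⟨i₀, rfl⟩)
  obtain ⟨e, he⟩ := MvPolynomial.ne_zero_iff.mp hZ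
  have he_lt : ∀ i, e i < p := fun i ↦ (MvPolynomial.degreeOf_lt_iff (Fact.out : p.Prime).pos).mp
    (hdeg i) e (MvPolynomial.mem_support_iff.mpr he)
  apply he
  rw [← MvPolynomial.coeff_coe, hW]
  exact MvPowerSeries.coeff_mul_eq_zero_of_forall_le (fun m hm ↦
    MvPowerSeries.coeff_pow_expChar_eq_zero_of_lt p _ hY₀ fun i ↦ (hm i).trans_lt (he_lt i)) W
end

section
/- Let K be a field of characteristic p > 0 and let (V, θ) be a module over the distribution algebra Dist(G_(n)) of the n-th Frobenius kernel, with divided powers e_α^{(k)}. Suppose θ(e_α^{(k)}) = 0 for all k ≥ ⌊(p^n+1)/2⌋ (the n-over-restricted condition). Then for all t ∈ K and all d ∈ Dist(G_(n)): θ(ad(Z_α(t))(d)) = Y_α(t)·θ(d)·Y_α(−t), where Z_α(t) = Σ_{k=0}^{p^n−1} t^k e_α^{(k)}, Y_α(t) = θ(Z_α(t)), and the adjoint action is ad(x)(d) = Σ x_{(1)} d S(x_{(2)}), using Δ(e_α^{(k)}) = Σ_{i+j=k} e_α^{(i)} ⊗ e_α^{(j)} and S(e_α^{(k)}) = (−1)^k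 e_α^{(k)}. -/
/-! Expanding `Δ(Z_α(t))` turns `θ(ad(Z_α(t))(d))` into the double sum
`∑_{i+j<pⁿ} t^i (-t)^j θ(e^{(i)}) θ(d) θ(e^{(j)})`, while the product
`Y_α(t) θ(d) Y_α(-t)` is the same sum over the full square `i, j < pⁿ`.
The extra terms have `i + j ≥ pⁿ`, hence `i` or `j` is at least `⌊(pⁿ+1)/2⌋`,
so they vanish on an `n`-over-restricted module. -/

open TensorProduct

/-- The Hopf-algebra adjoint action `ad(x)(d) = ∑ x₍₁₎ · d · S(x₍₂₎)`. -/
noncomputable def hopfAd (K H : Type*) [CommRing K] [Ring H] [HopfAlgebra K H]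
    (x d : H) : H :=
  TensorProduct.lift
    (((LinearMap.mul K H).comp (LinearMap.mulRight K d)).compl₂
      (HopfAlgebra.antipode (R := K)))
    (Coalgebra.comul (R := K) x)

open Finset

section HopfAd

variable {K H : Type*} [CommRing K] [Ring H] [HopfAlgebra K H]

theorem hopfAd_sum {ι : Type*} (s : Finset ι) (x : ι → H) (d : H) :
    hopfAd K H (∑ i ∈ s, x i) d = ∑ i ∈ s, hopfAd K H (x i) d := by
  simp only [hopfAd, map_sum]

theorem hopfAd_smul (c : K) (x d : H) : hopfAd K H (c • x) d = c • hopfAd K H x d := by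
  simp only [hopfAd, map_smul]

theorem hopfAd_of_comul_eq_sum_antidiagonal {e : ℕ → H}
    (hcomul : ∀ k : ℕ, Coalgebra.comul (R := K) (e k) =
      ∑ ij ∈ antidiagonal k, e ij.1 ⊗ₜ[K] e ij.2)
    (hS : ∀ k : ℕ, HopfAlgebra.antipode (R := K) (e k) = ((-1 : K) ^ k) • e k)
    (k : ℕ) (d : H) :
    hopfAd K H (e k) d = ∑ ij ∈ antidiagonal k, ((-1 : K) ^ ij.2) • (e ij.1 * d * e ij.2) := by
  simp only [hopfAd, hcomul, map_sum, lift.tmul, LinearMap.compl₂_apply, LinearMap.comp_apply,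
    LinearMap.mulRight_apply, LinearMap.mul_apply', hS, mul_smul_comm]

end HopfAd

theorem Finset.sum_range_sum_antidiagonal_eq_sum_range_sum_range {M : Type*} [AddCommMonoid M]
    {N : ℕ} {f : ℕ → ℕ → M} (hf : ∀ i < N, ∀ j < N, N ≤ i + j → f i j = 0) :
    ∑ k ∈ range N, ∑ ij ∈ antidiagonal k, f ij.1 ij.2 = ∑ i ∈ range N, ∑ j ∈ range N, f i j := by
  classical
  set T := (range N ×ˢ range N).filter fun ij => ij.1 + ij.2 < N
  have hfiber : ∀ k ∈ range N, antidiagonal k = T.filter fun ij => ij.1 + ij.2 = k := by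
    intro k hk
    ext ij
    simp only [T, mem_range, HasAntidiagonal.mem_antidiagonal, mem_filter, mem_product] at hk ⊢
    omega
  calc ∑ k ∈ range N, ∑ ij ∈ antidiagonal k, f ij.1 ij.2
      = ∑ ij ∈ T, f ij.1 ij.2 := by
        rw [sum_congr rfl fun k hk => by rw [hfiber k hk]]
        exact sum_fiberwise_of_maps_to (fun ij hij => mem_range.mpr (mem_filter.mp hij).2) _
    _ = ∑ ij ∈ range N ×ˢ range N, f ij.1 ij.2 := by
        refine sum_subset (filter_subset _ _) fun ij hij hijT => hf _ ?_ _ ?_ ?_ <;>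
          simp only [T, mem_filter, mem_product, mem_range] at hij hijT <;> omega
    _ = ∑ i ∈ range N, ∑ j ∈ range N, f i j := sum_product _ _ _

theorem stmt_17_general (K : Type*) [Field K] (p : ℕ) (n : ℕ)
    (H : Type*) [Ring H] [HopfAlgebra K H]
    (V : Type*) [AddCommGroup V] [Module K V]
    (e : ℕ → H)
    (hcomul : ∀ k : ℕ, Coalgebra.comul (R := K) (e k) =
      ∑ ij ∈ Finset.HasAntidiagonal.antidiagonal k, e ij.1 ⊗ₜ[K] e ij.2)
    (hS : ∀ k : ℕ, HopfAlgebra.antipode (R := K) (e k) = ((-1 : K) ^ k) • e k)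
    (θ : H →ₐ[K] Module.End K V)
    (hover : ∀ k : ℕ, (p ^ n + 1) / 2 ≤ k → θ (e k) = 0)
    (t : K) (d : H) :
    θ (hopfAd K H (∑ k ∈ Finset.range (p ^ n), t ^ k • e k) d) =
      (∑ k ∈ Finset.range (p ^ n), t ^ k • θ (e k)) * θ d *
      (∑ k ∈ Finset.range (p ^ n), (-t) ^ k • θ (e k)) := by
  set N := p ^ n
  set F : ℕ → ℕ → Module.End K V := fun i j => (t ^ i * (-t) ^ j) • (θ (e i) * θ d * θ (e j))
  calc θ (hopfAd K H (∑ k ∈ range N, t ^ k • e k) d)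
      = ∑ k ∈ range N, ∑ ij ∈ antidiagonal k, F ij.1 ij.2 := by
        simp only [hopfAd_sum, hopfAd_smul, hopfAd_of_comul_eq_sum_antidiagonal hcomul hS,
          map_sum, map_smul, map_mul, smul_sum, smul_smul, F]
        refine sum_congr rfl fun k _ => sum_congr rfl fun ij hij => ?_
        rw [← HasAntidiagonal.mem_antidiagonal.mp hij, pow_add, neg_pow t]
        congr 1; ring
    _ = ∑ i ∈ range N, ∑ j ∈ range N, F i j := by
        refine sum_range_sum_antidiagonal_eq_sum_range_sum_range fun i _ j _ hij => ?_
        rcases (by omega : (N + 1) / 2 ≤ i ∨ (N + 1) / 2 ≤ j) with h | h <;> simp [F, hover _ h]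
    _ = _ := by
        rw [sum_mul, sum_mul_sum]
        refine sum_congr rfl fun i _ => sum_congr rfl fun j _ => ?_
        simp only [F, smul_mul_assoc, mul_smul_comm, smul_smul, mul_comm ((-t) ^ j)]

/-- For divided powers `e^{(k)} = e_α^{(k)}`, `0 ≤ k < pⁿ`, in the distribution
algebra of the `n`-th Frobenius kernel (a Hopf algebra `H`), with
`Δ(e^{(k)}) = ∑_{i+j=k} e^{(i)} ⊗ e^{(j)}` and `S(e^{(k)}) = (−1)^k e^{(k)}`, and an
`n`-over-restricted module `(V, θ)` (i.e. `θ(e^{(k)}) = 0` for `k ≥ ⌊(pⁿ+1)/2⌋`),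
conjugation by `Y_α(t) = θ(Z_α(t))`, `Z_α(t) = ∑_{k<pⁿ} t^k e^{(k)}`, realizes the
adjoint action: `θ(ad(Z_α(t))(d)) = Y_α(t)·θ(d)·Y_α(−t)` for all `t, d`. -/
theorem stmt_17 (K : Type*) [Field K] (p : ℕ) [Fact p.Prime] [CharP K p] (n : ℕ)
    (H : Type*) [Ring H] [HopfAlgebra K H]
    (V : Type*) [AddCommGroup V] [Module K V]
    (e : ℕ → H) (he0 : e 0 = 1)
    (hcomul : ∀ k : ℕ, Coalgebra.comul (R := K) (e k) =
      ∑ ij ∈ Finset.HasAntidiagonal.antidiagonal k, e ij.1 ⊗ₜ[K] e ij.2)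
    (hS : ∀ k : ℕ, HopfAlgebra.antipode (R := K) (e k) = ((-1 : K) ^ k) • e k)
    (θ : H →ₐ[K] Module.End K V)
    (hover : ∀ k : ℕ, (p ^ n + 1) / 2 ≤ k → θ (e k) = 0)
    (t : K) (d : H) :
    θ (hopfAd K H (∑ k ∈ Finset.range (p ^ n), t ^ k • e k) d) =
      (∑ k ∈ Finset.range (p ^ n), t ^ k • θ (e k)) * θ d *
      (∑ k ∈ Finset.range (p ^ n), (-t) ^ k • θ (e k)) :=
  stmt_17_general K p n H V e hcomul hS θ hover t d
end
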